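/- Suppose t is a canonical closed Ψ-term and t rewrites in one step to u in Ψ. Then there is a natural number n such that: (1) ⟦t⟧_w →h ⟦u⟧_w in one step of weak call-by-name reduction; (2) there is a canonical Ψ-term v with u →ⁿ v in Ψ; (3) for every m ≤ n and every w with u →ᵐ w in Ψ, the number of occurrences of the function symbol app in w equals the number of occurrences of app in u plus m; (4) for every such w, ⟦w⟧_w = ⟦u⟧_w. -/

import Mathlib

/-- Untyped λ-terms over variables drawn from ℕ (a denumerable totally ordered set). -/
inductive Lam : Type
  | var : ℕ → Lam
  | lam : ℕ → Lam → Lam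
  | app : Lam → Lam → Lam
deriving DecidableEq, Repr

namespace Lam

/-- Capture-permitting substitution M{N/x} (adequate for weak reduction of closed terms). -/
def subst : Lam → ℕ → Lam → Lam
  | var y, x, N => if y = x then N else var y
  | lam y M, x, N => if y = x then lam y M else lam y (subst M x N)
  | app M₁ M₂, x, N => app (subst M₁ x N) (subst M₂ x N)

/-- Simultaneous substitution along a partial assignment of terms to variables. -/
def msubst : Lam → (ℕ → Option Lam) → Lam
  | var y, σ => (σ y).getD (var y)
  | lam y M, σ => lam y (msubst M (fun z => if z = y then none else σ z))
  | app M₁ M₂, σ => app (msubst M₁ σ) (msubst M₂ σ)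

/-- The assignment sending each `xᵢ` to `tᵢ` (first match wins). -/
def substOf (xs : List ℕ) (ts : List Lam) : ℕ → Option Lam :=
  fun y => (xs.zip ts).lookup y

/-- Values: variables and abstractions. -/
def IsValue : Lam → Prop
  | var _ => True
  | lam _ _ => True
  | app _ _ => False

/-- Weak call-by-value reduction. -/
inductive CbvStep : Lam → Lam → Prop
  | beta {x : ℕ} {M V : Lam} : IsValue V → CbvStep (app (lam x M) V) (subst M x V)
  | appL {M N L : Lam} : CbvStep M N → CbvStep (app M L) (app N L)
  | appR {M N L : Lam} : CbvStep M N → CbvStep (app L M) (app L N)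

/-- A →v-normal form. -/
def CbvNormal (M : Lam) : Prop := ¬ ∃ N, CbvStep M N

/-- Free variables, as a finite set. -/
def fv : Lam → Finset ℕ
  | var x => {x}
  | lam x M => fv M \ {x}
  | app M N => fv M ∪ fv N

/-- The sequence (without repetitions, in variable order) of free variables of `M`. -/
def fvList (M : Lam) : List ℕ := (fv M).sort (· ≤ ·)

def Closed (M : Lam) : Prop := fv M = ∅

/-- The size |M| of a λ-term. -/
def size : Lam → ℕ
  | var _ => 1
  | lam _ M => size M + 1
  | app M N => size M + size N + 1

end Lam

/-- `NSteps r n a b`: `a` reduces to `b` in exactly `n` `r`-steps. -/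
def NSteps {α : Type*} (r : α → α → Prop) : ℕ → α → α → Prop
  | 0 => fun a b => a = b
  | n + 1 => fun a c => ∃ b, r a b ∧ NSteps r n b c

/-- Weak call-by-name reduction →h. -/
inductive CbnStep : Lam → Lam → Prop
  | beta {x : ℕ} {M N : Lam} : CbnStep (Lam.app (Lam.lam x M) N) (Lam.subst M x N)
  | appL {M M' L : Lam} : CbnStep M M' → CbnStep (Lam.app M L) (Lam.app M' L)

/-- Terms of the constructor rewrite system Ψ: variables, the binary function
symbol `app`, the binary constructor `capp`, and for every λ-term `M` and variable
`x` a constructor `c_{x,M}` (here `con x M`) of arity the length of FV(λx.M). -/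
inductive QTerm : Type
  | var : ℕ → QTerm
  | app : QTerm → QTerm → QTerm
  | capp : QTerm → QTerm → QTerm
  | con : ℕ → Lam → List QTerm → QTerm

namespace QTerm

/-- Well-formed Ψ-terms: arities are respected. -/
inductive WFQ : QTerm → Prop
  | var {x} : WFQ (var x)
  | app {u v} : WFQ u → WFQ v → WFQ (app u v)
  | capp {u v} : WFQ u → WFQ v → WFQ (capp u v)
  | con {x M ts} : ts.length = (Lam.fvList (Lam.lam x M)).length →
      (∀ t ∈ ts, WFQ t) → WFQ (con x M ts)

/-- Constructor terms of Ψ: built only from `capp` and the `c_{x,M}`. -/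
inductive IsConTermQ : QTerm → Prop
  | capp {u v} : IsConTermQ u → IsConTermQ v → IsConTermQ (capp u v)
  | con {x M ts} : (∀ t ∈ ts, IsConTermQ t) → IsConTermQ (con x M ts)

/-- Closed Ψ-terms: no variables. -/
inductive ClosedQ : QTerm → Prop
  | app {u v} : ClosedQ u → ClosedQ v → ClosedQ (app u v)
  | capp {u v} : ClosedQ u → ClosedQ v → ClosedQ (capp u v)
  | con {x M ts} : (∀ t ∈ ts, ClosedQ t) → ClosedQ (con x M ts)

/-- Canonical closed Ψ-terms: either a constructor term of the form
c_{x,M}(t₁,…,tₙ), or app(u,v) with u canonical and v a constructor term. -/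
inductive CanonicalQ : QTerm → Prop
  | con {x M ts} : (∀ t ∈ ts, IsConTermQ t) → CanonicalQ (con x M ts)
  | app {u v} : CanonicalQ u → IsConTermQ v → CanonicalQ (app u v)

/-- Substitution of Ψ-terms for variables. -/
def qsubst (σ : ℕ → Option QTerm) : QTerm → QTerm
  | var y => (σ y).getD (var y)
  | app u v => app (qsubst σ u) (qsubst σ v)
  | capp u v => capp (qsubst σ u) (qsubst σ v)
  | con x M ts => con x M (ts.attach.map (fun t => qsubst σ t.1))
decreasing_by
  all_goals simp_wf
  all_goals try have := List.sizeOf_lt_of_mem t.2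
  all_goals omega

/-- The assignment sending each `xᵢ` to `tᵢ`. -/
def substOfQ (xs : List ℕ) (ts : List QTerm) : ℕ → Option QTerm :=
  fun y => (xs.zip ts).lookup y

/-- The number of occurrences of the function symbol `app` in a Ψ-term. -/
def countApp : QTerm → ℕ
  | var _ => 0
  | app u v => countApp u + countApp v + 1
  | capp u v => countApp u + countApp v
  | con _ _ ts => (ts.attach.map (fun t => countApp t.1)).sum
decreasing_by
  all_goals simp_wf
  all_goals try have := List.sizeOf_lt_of_mem t.2
  all_goals omega

end QTerm

/-- The auxiliary translation ⟨·⟩'_w from λ-terms to Ψ-constructor terms. -/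
def transW' : Lam → QTerm
  | .var x => .var x
  | .lam x M => .con x M ((Lam.fvList (.lam x M)).map .var)
  | .app M N => .capp (transW' M) (transW' N)

/-- The translation ⟨·⟩_w from λ-terms to Ψ-terms. -/
def transW : Lam → QTerm
  | .var x => .var x
  | .lam x M => .con x M ((Lam.fvList (.lam x M)).map .var)
  | .app M N => .app (transW M) (transW' N)

/-- The readback ⟦·⟧_w from Ψ-terms to λ-terms. -/
def readbackW : QTerm → Lam
  | .var x => .var x
  | .app u v => .app (readbackW u) (readbackW v)
  | .capp u v => .app (readbackW u) (readbackW v)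
  | .con x M ts =>
      Lam.msubst (.lam x M)
        (Lam.substOf (Lam.fvList (.lam x M)) (ts.attach.map (fun t => readbackW t.1)))
decreasing_by
  all_goals simp_wf
  all_goals try have := List.sizeOf_lt_of_mem t.2
  all_goals omega

/-- One-step rewriting in Ψ: the five families of ordinary rules and the
administrative rule, with matched variables instantiated by constructor terms,
closed under arbitrary contexts. -/
inductive PsiStep : QTerm → QTerm → Prop
  | id_capp {z : ℕ} {w f : QTerm} :
      QTerm.IsConTermQ w → QTerm.IsConTermQ f →
      PsiStep (.app (.con z (.var z) []) (.capp w f)) (.app w f)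
  | id_con {z x : ℕ} {M : Lam} {ts : List QTerm} :
      (∀ t ∈ ts, QTerm.IsConTermQ t) →
      ts.length = (Lam.fvList (.lam x M)).length →
      PsiStep (.app (.con z (.var z) []) (.con x M ts)) (.con x M ts)
  | proj_capp {z w : ℕ} {f g h : QTerm} :
      w ≠ z → QTerm.IsConTermQ f → QTerm.IsConTermQ g → QTerm.IsConTermQ h →
      PsiStep (.app (.con z (.var w) [.capp f g]) h) (.app f g)
  | proj_con {z w x : ℕ} {M : Lam} {ts : List QTerm} {h : QTerm} :
      w ≠ z → (∀ t ∈ ts, QTerm.IsConTermQ t) →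
      ts.length = (Lam.fvList (.lam x M)).length →
      QTerm.IsConTermQ h →
      PsiStep (.app (.con z (.var w) [.con x M ts]) h) (.con x M ts)
  | beta {y : ℕ} {N : Lam} {ts : List QTerm} {v : QTerm} :
      (∀ z : ℕ, N ≠ .var z) →
      (∀ t ∈ ts, QTerm.IsConTermQ t) → QTerm.IsConTermQ v →
      ts.length = (Lam.fvList (.lam y N)).length →
      PsiStep (.app (.con y N ts) v)
        (QTerm.qsubst (QTerm.substOfQ (Lam.fvList (.lam y N) ++ [y]) (ts ++ [v]))
          (transW N))
  | adm {a b c : QTerm} :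
      QTerm.IsConTermQ a → QTerm.IsConTermQ b → QTerm.IsConTermQ c →
      PsiStep (.app (.capp a b) c) (.app (.app a b) c)
  | appL {u u' v} : PsiStep u u' → PsiStep (.app u v) (.app u' v)
  | appR {u v v'} : PsiStep v v' → PsiStep (.app u v) (.app u v')
  | cappL {u u' v} : PsiStep u u' → PsiStep (.capp u v) (.capp u' v)
  | cappR {u v v'} : PsiStep v v' → PsiStep (.capp u v) (.capp u v')
  | conArg {x M ts₁ t t' ts₂} : PsiStep t t' →
      PsiStep (.con x M (ts₁ ++ t :: ts₂)) (.con x M (ts₁ ++ t' :: ts₂))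

/-!
A canonical term `app(⋯app(c_{x,M}(t⃗), v₁)⋯, vₖ)` can only be rewritten at its innermost `app`,
and its readback is `(λx.M{⟦t⃗⟧/x⃗}) ⟦v₁⟧ ⋯ ⟦vₖ⟧`: each ordinary rule contracts exactly the head
β-redex. For the rule of `c_{y,N}` this rests on the readbacks of well-formed constructor terms
being closed, so that `N{⟦t⃗⟧/x⃗}{⟦v⟧/y}` is the simultaneous substitution `N{⟦t⃗⟧/x⃗, ⟦v⟧/y}`.

The contractum need not be canonical: a constructor term `capp(⋯capp(a, b)⋯)` may land in head
position (as the argument of an identity or projection, or as the value of a head variable of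
`N`). Its left `capp`-spine is then unfolded by the administrative rule, and these steps are
forced: each creates one `app` and leaves the readback unchanged.
-/

namespace List
variable {κ α β : Type*} [BEq κ] [LawfulBEq κ]

theorem lookup_zip_map (f : α → β) (xs : List κ) (ts : List α) (z : κ) :
    (xs.zip (ts.map f)).lookup z = ((xs.zip ts).lookup z).map f := by
  induction xs generalizing ts with
  | nil => rfl
  | cons x xs ih => cases ts <;> grind

theorem lookup_zip_map_self (g : κ → α) {ys : List κ} {z : κ} (hz : z ∈ ys) :
    (ys.zip (ys.map g)).lookup z = some (g z) := by
  have : ys.zip (ys.map g) = ys.map fun x => (x, g x) := by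
    simpa using zip_map' (f := id) (g := g) (l := ys)
  rw [this, lookup_graph g hz]

theorem lookup_zip_isSome {xs : List κ} {ts : List α} (hlen : xs.length = ts.length) {z : κ}
    (hz : z ∈ xs) : ((xs.zip ts).lookup z).isSome := by
  induction xs generalizing ts with
  | nil => simp at hz
  | cons x xs ih => cases ts <;> grind

theorem mem_of_lookup_zip_eq_some {xs : List κ} {ts : List α} {z : κ} {t : α}
    (h : (xs.zip ts).lookup z = some t) : t ∈ ts := by
  obtain ⟨l₁, l₂, hzip, -⟩ := lookup_eq_some_iff.1 h
  exact (of_mem_zip (hzip ▸ mem_append_right l₁ mem_cons_self)).2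

theorem lookup_zip_eq_none {xs : List κ} {ts : List α} {z : κ} (hz : z ∉ xs) :
    (xs.zip ts).lookup z = none := by
  rw [lookup_eq_none_iff]
  intro p hp
  have hp₁ := (of_mem_zip hp).1
  simpa using ne_of_mem_of_not_mem hp₁ hz |>.symm

theorem lookup_zip_append_singleton_of_not_mem {xs : List κ} {ts : List α}
    (hlen : xs.length = ts.length) {y : κ} (hy : y ∉ xs) (v : α) :
    ((xs ++ [y]).zip (ts ++ [v])).lookup y = some v := by
  simp [zip_append hlen, lookup_append, lookup_zip_eq_none hy]

theorem lookup_zip_append_singleton_of_ne {xs : List κ} {ts : List α}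
    (hlen : xs.length = ts.length) {y z : κ} (hz : z ≠ y) (v : α) :
    ((xs ++ [y]).zip (ts ++ [v])).lookup z = (xs.zip ts).lookup z := by
  simp [zip_append hlen, lookup_append, lookup_cons, beq_false_of_ne hz]

end List

namespace Lam

theorem mem_fvList {M : Lam} {z : ℕ} : z ∈ M.fvList ↔ z ∈ M.fv := by
  simp [fvList]

theorem subst_eq_self_of_not_mem_fv (V : Lam) {y : ℕ} :
    ∀ {M : Lam}, y ∉ M.fv → M.subst y V = M
  | var x, h => by
    simp only [fv, Finset.mem_singleton] at h
    simp [subst, Ne.symm h]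
  | lam x M, h => by
    by_cases hxy : x = y
    · simp [subst, hxy]
    · have : y ∉ M.fv := fun hy => h (by simp [fv, hy, Ne.symm hxy])
      simp [subst, hxy, subst_eq_self_of_not_mem_fv V this]
  | app M N, h => by
    simp only [fv, Finset.mem_union, not_or] at h
    simp [subst, subst_eq_self_of_not_mem_fv V h.1, subst_eq_self_of_not_mem_fv V h.2]

theorem msubst_congr : ∀ {M : Lam} {σ₁ σ₂ : ℕ → Option Lam},
    (∀ z ∈ M.fv, (σ₁ z).getD (var z) = (σ₂ z).getD (var z)) → M.msubst σ₁ = M.msubst σ₂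
  | var x, _, _, h => by simpa [msubst] using h x (by simp [fv])
  | lam x M, _, _, h => by
    simp only [msubst, lam.injEq, true_and]
    refine msubst_congr fun z hz => ?_
    by_cases hzx : z = x
    · simp [hzx]
    · simpa [hzx] using h z (by simp [fv, hz, hzx])
  | app M N, _, _, h => by
    simp only [msubst, app.injEq]
    exact ⟨msubst_congr fun z hz => h z (by simp [fv, hz]),
      msubst_congr fun z hz => h z (by simp [fv, hz])⟩

def ClosedSubst (σ : ℕ → Option Lam) : Prop :=
  ∀ z M, σ z = some M → M.fv = ∅

theorem ClosedSubst.erase {σ : ℕ → Option Lam} (hσ : ClosedSubst σ) (x : ℕ) :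
    ClosedSubst fun z => if z = x then none else σ z := by
  intro z M hz
  by_cases hzx : z = x
  · simp [hzx] at hz
  · exact hσ z M (by simpa [hzx] using hz)

theorem fv_msubst_subset : ∀ {M : Lam} {σ : ℕ → Option Lam}, ClosedSubst σ →
    (M.msubst σ).fv ⊆ M.fv.filter (σ · = none)
  | var x, σ, hσ => by
    cases hx : σ x with
    | none => simp [msubst, fv, hx]
    | some t => simp [msubst, hx, hσ x t hx]
  | lam x M, σ, hσ => by
    intro w hw
    simp only [msubst, fv, Finset.mem_sdiff, Finset.mem_singleton] at hw
    have := fv_msubst_subset (hσ.erase x) hw.1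
    simp only [Finset.mem_filter, if_neg hw.2] at this
    simp [fv, this, hw.2]
  | app M N, σ, hσ => by
    intro w hw
    simp only [msubst, fv, Finset.mem_union] at hw
    rcases hw with hw | hw <;>
    · have := Finset.mem_filter.1 (fv_msubst_subset hσ hw)
      simp [fv, this]

theorem fv_msubst_eq_empty {M : Lam} {σ : ℕ → Option Lam} (hσ : ClosedSubst σ)
    (hcov : ∀ z ∈ M.fv, (σ z).isSome) : (M.msubst σ).fv = ∅ := by
  refine Finset.eq_empty_of_forall_notMem fun w hw => ?_
  obtain ⟨hwM, hw⟩ := Finset.mem_filter.1 (fv_msubst_subset hσ hw)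
  simpa [hw] using hcov w hwM

theorem subst_msubst (V : Lam) : ∀ {M : Lam} {σ : ℕ → Option Lam} {y : ℕ}, ClosedSubst σ →
    σ y = none → (M.msubst σ).subst y V = M.msubst (fun z => if z = y then some V else σ z)
  | var x, σ, y, hσ, hy => by
    by_cases hxy : x = y
    · simp [msubst, hxy, hy, subst]
    · cases hx : σ x with
      | none => simp [msubst, hx, subst, hxy]
      | some t =>
        simp [msubst, hx, hxy, subst_eq_self_of_not_mem_fv V (M := t) (by simp [hσ x t hx])]
  | lam x M, σ, y, hσ, hy => by
    by_cases hxy : x = y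
    · subst hxy
      simp only [msubst, subst, if_true, lam.injEq, true_and]
      refine msubst_congr fun z _ => ?_
      by_cases hzx : z = x <;> simp [hzx]
    · simp only [msubst, subst, if_neg hxy, lam.injEq, true_and]
      rw [subst_msubst V (hσ.erase x) (by simp [Ne.symm hxy, hy])]
      refine msubst_congr fun z _ => ?_
      by_cases hzx : z = x
      · simp [hzx, hxy]
      · by_cases hzy : z = y <;> simp [hzx, hzy, Ne.symm hxy]
  | app M N, σ, y, hσ, hy => by
    simp [msubst, subst, subst_msubst V hσ hy]

end Lam

namespace QTerm

@[simp] theorem readbackW_var (x : ℕ) : readbackW (var x) = .var x := by simp [readbackW]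

@[simp] theorem readbackW_app (u v : QTerm) :
    readbackW (app u v) = .app (readbackW u) (readbackW v) := by simp [readbackW]

@[simp] theorem readbackW_capp (u v : QTerm) :
    readbackW (capp u v) = .app (readbackW u) (readbackW v) := by simp [readbackW]

theorem readbackW_con (x : ℕ) (M : Lam) (ts : List QTerm) :
    readbackW (con x M ts) =
      (Lam.lam x M).msubst (Lam.substOf (Lam.fvList (.lam x M)) (ts.map readbackW)) := by
  simp [readbackW]

@[simp] theorem qsubst_var (σ : ℕ → Option QTerm) (x : ℕ) :
    qsubst σ (var x) = (σ x).getD (var x) := by simp [qsubst]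

@[simp] theorem qsubst_app (σ : ℕ → Option QTerm) (u v : QTerm) :
    qsubst σ (app u v) = app (qsubst σ u) (qsubst σ v) := by simp [qsubst]

@[simp] theorem qsubst_capp (σ : ℕ → Option QTerm) (u v : QTerm) :
    qsubst σ (capp u v) = capp (qsubst σ u) (qsubst σ v) := by simp [qsubst]

@[simp] theorem qsubst_con (σ : ℕ → Option QTerm) (x : ℕ) (M : Lam) (ts : List QTerm) :
    qsubst σ (con x M ts) = con x M (ts.map (qsubst σ)) := by
  simp [qsubst]

@[simp] theorem countApp_app (u v : QTerm) :
    countApp (app u v) = countApp u + countApp v + 1 := by simp [countApp]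

@[simp] theorem countApp_capp (u v : QTerm) :
    countApp (capp u v) = countApp u + countApp v := by simp [countApp]

theorem countApp_con (x : ℕ) (M : Lam) (ts : List QTerm) :
    countApp (con x M ts) = (ts.map countApp).sum := by
  simp [countApp]

theorem IsConTermQ.countApp_eq_zero {s : QTerm} (hs : IsConTermQ s) : countApp s = 0 := by
  induction hs with
  | capp _ _ ihu ihv => simp [ihu, ihv]
  | con _ ih => simpa [countApp_con, List.sum_eq_zero_iff] using ih

theorem IsConTermQ.not_psiStep {s u : QTerm} (hs : IsConTermQ s) : ¬ PsiStep s u := by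
  intro h
  induction h with
  | cappL _ ih => cases hs with | capp hu _ => exact ih hu
  | cappR _ ih => cases hs with | capp _ hv => exact ih hv
  | conArg _ ih => cases hs with | con hts => exact ih (hts _ (by simp))
  | _ => cases hs

theorem IsConTermQ.fv_readbackW_eq_empty {s : QTerm} (hs : IsConTermQ s) (hw : WFQ s) :
    (readbackW s).fv = ∅ := by
  induction hs with
  | capp _ _ ihu ihv =>
    cases hw with | capp hwu hwv => simp [Lam.fv, ihu hwu, ihv hwv]
  | @con x M ts _ ih =>
    cases hw with | con hlen hwts =>
    rw [readbackW_con]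
    refine Lam.fv_msubst_eq_empty (fun z t hzt => ?_) fun z hz => ?_
    · obtain ⟨q, hq, rfl⟩ := List.mem_map.1 (List.mem_of_lookup_zip_eq_some hzt)
      exact ih q hq (hwts q hq)
    · exact List.lookup_zip_isSome (by simp [hlen]) (Lam.mem_fvList.2 hz)


theorem readbackW_qsubst_transW' (σ : ℕ → Option QTerm) : ∀ P : Lam,
    readbackW (qsubst σ (transW' P)) = P.msubst fun z => (σ z).map readbackW
  | .var x => by cases hx : σ x <;> simp [transW', Lam.msubst, hx]
  | .app M N => by
    simp [transW', Lam.msubst, readbackW_qsubst_transW' σ M, readbackW_qsubst_transW' σ N]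
  | .lam x M => by
    simp only [transW', qsubst_con, List.map_map, readbackW_con]
    refine Lam.msubst_congr fun z hz => ?_
    rw [Lam.substOf, List.lookup_zip_map_self _ (Lam.mem_fvList.2 hz)]
    cases hσz : σ z <;> simp [hσz]

theorem readbackW_qsubst_transW (σ : ℕ → Option QTerm) : ∀ P : Lam,
    readbackW (qsubst σ (transW P)) = P.msubst fun z => (σ z).map readbackW
  | .var x => readbackW_qsubst_transW' σ (.var x)
  | .lam x M => readbackW_qsubst_transW' σ (.lam x M)
  | .app M N => by
    simp [transW, Lam.msubst, readbackW_qsubst_transW σ M, readbackW_qsubst_transW' σ N]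


def cappDepth : QTerm → ℕ
  | capp a _ => cappDepth a + 1
  | _ => 0

/-- `AlmostCanonical u n`: `u` becomes canonical after `n` administrative steps, which are the
only reductions available to it. -/
inductive AlmostCanonical : QTerm → ℕ → Prop
  | con {x M ts} : (∀ t ∈ ts, IsConTermQ t) → AlmostCanonical (con x M ts) 0
  | head {c v} : IsConTermQ c → IsConTermQ v → AlmostCanonical (app c v) (cappDepth c)
  | app {u v n} : AlmostCanonical u n → IsConTermQ v → AlmostCanonical (app u v) n

namespace AlmostCanonical

theorem canonicalQ {u : QTerm} (h : AlmostCanonical u 0) : CanonicalQ u := by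
  generalize hn : 0 = n at h
  induction h with
  | con hts => exact .con hts
  | head hc hv =>
    cases hc with
    | capp => simp [cappDepth] at hn
    | con hts => exact .app (.con hts) hv
  | app _ hv ih => exact .app (ih hn) hv

theorem exists_psiStep {u : QTerm} {n : ℕ} (h : AlmostCanonical u (n + 1)) :
    ∃ w, PsiStep u w ∧ AlmostCanonical w n := by
  generalize hn : n + 1 = m at h
  induction h generalizing n with
  | con => omega
  | @head c v hc hv =>
    cases hc with
    | @capp a b ha hb =>
      obtain rfl : n = cappDepth a := by simp only [cappDepth] at hn; omega
      exact ⟨_, .adm ha hb hv, .app (.head ha hb) hv⟩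
    | con => simp [cappDepth] at hn
  | app _ hv ih =>
    subst hn
    obtain ⟨w, hw, hpw⟩ := ih rfl
    exact ⟨_, .appL hw, .app hpw hv⟩

theorem psiStep {u w : QTerm} {n : ℕ} (h : AlmostCanonical u (n + 1)) (hs : PsiStep u w) :
    AlmostCanonical w n ∧ countApp w = countApp u + 1 ∧ readbackW w = readbackW u := by
  generalize hn : n + 1 = m at h
  induction h generalizing n w with
  | con => omega
  | @head c v hc hv =>
    cases hc with
    | con => simp [cappDepth] at hn
    | @capp a b ha hb =>
      cases hs with
      | adm =>
        obtain rfl : n = cappDepth a := by simp only [cappDepth] at hn; omega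
        refine ⟨.app (.head ha hb) hv, ?_, by simp⟩
        simp [ha.countApp_eq_zero, hb.countApp_eq_zero, hv.countApp_eq_zero]
      | appL hs => exact ((ha.capp hb).not_psiStep hs).elim
      | appR hs => exact (hv.not_psiStep hs).elim
  | app hu hv ih =>
    subst hn
    cases hs with
    | appL hs =>
      obtain ⟨h₁, h₂, h₃⟩ := ih hs rfl
      exact ⟨.app h₁ hv, by simp [h₂]; omega, by simp [h₃]⟩
    | appR hs => exact (hv.not_psiStep hs).elim
    | _ => cases hu

theorem exists_nSteps_canonicalQ {u : QTerm} {n : ℕ} (h : AlmostCanonical u n) :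
    ∃ v, NSteps PsiStep n u v ∧ CanonicalQ v := by
  induction n generalizing u with
  | zero => exact ⟨u, rfl, h.canonicalQ⟩
  | succ n ih =>
    obtain ⟨w, hw, hpw⟩ := h.exists_psiStep
    obtain ⟨v, hv, hcv⟩ := ih hpw
    exact ⟨v, ⟨w, hw, hv⟩, hcv⟩

theorem nSteps {u w : QTerm} {n m : ℕ} (h : AlmostCanonical u n) (hm : m ≤ n)
    (hw : NSteps PsiStep m u w) :
    countApp w = countApp u + m ∧ readbackW w = readbackW u := by
  induction m generalizing n u with
  | zero => cases hw; simp
  | succ m ih =>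
    obtain ⟨u₁, h₁, h₂⟩ := hw
    obtain ⟨n, rfl⟩ : ∃ n', n = n' + 1 := ⟨n - 1, by omega⟩
    obtain ⟨hu₁, hc₁, hr₁⟩ := h.psiStep h₁
    obtain ⟨hc₂, hr₂⟩ := ih hu₁ (by omega) h₂
    exact ⟨by omega, hr₂.trans hr₁⟩

end AlmostCanonical


def AssignsConTerms (σ : ℕ → Option QTerm) (P : Lam) : Prop :=
  ∀ z ∈ P.fv, ∃ s, σ z = some s ∧ IsConTermQ s

theorem AssignsConTerms.mono {σ : ℕ → Option QTerm} {P Q : Lam} (h : AssignsConTerms σ P)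
    (hPQ : Q.fv ⊆ P.fv) : AssignsConTerms σ Q :=
  fun z hz => h z (hPQ hz)

theorem isConTermQ_qsubst_transW' {σ : ℕ → Option QTerm} :
    ∀ {P : Lam}, AssignsConTerms σ P → IsConTermQ (qsubst σ (transW' P))
  | .var x, hσ => by
    obtain ⟨s, hs, hcs⟩ := hσ x (by simp [Lam.fv])
    simpa [transW', hs] using hcs
  | .app M N, hσ => by
    simp only [transW', qsubst_capp]
    exact .capp (isConTermQ_qsubst_transW' (hσ.mono (by simp [Lam.fv])))
      (isConTermQ_qsubst_transW' (hσ.mono (by simp [Lam.fv])))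
  | .lam x M, hσ => by
    simp only [transW', qsubst_con, List.map_map]
    refine .con fun t ht => ?_
    obtain ⟨z, hz, rfl⟩ := List.mem_map.1 ht
    obtain ⟨s, hs, hcs⟩ := hσ z (Lam.mem_fvList.1 hz)
    simpa [hs] using hcs

theorem exists_almostCanonical_qsubst_transW {σ : ℕ → Option QTerm} :
    ∀ {P : Lam}, (∀ z, P ≠ .var z) → AssignsConTerms σ P →
      ∃ n, AlmostCanonical (qsubst σ (transW P)) n
  | .var z, hP, _ => (hP z rfl).elim
  | .lam x M, _, hσ => by
    have := isConTermQ_qsubst_transW' hσ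
    simp only [transW', qsubst_con] at this
    cases this with | con hts => exact ⟨0, by simpa [transW] using AlmostCanonical.con hts⟩
  | .app A B, _, hσ => by
    have hB := isConTermQ_qsubst_transW' (hσ.mono (Q := B) (by simp [Lam.fv]))
    have hA : AssignsConTerms σ A := hσ.mono (by simp [Lam.fv])
    simp only [transW, qsubst_app]
    by_cases hAvar : ∃ z, A = .var z
    · obtain ⟨z, rfl⟩ := hAvar
      obtain ⟨s, hs, hcs⟩ := hA z (by simp [Lam.fv])
      exact ⟨_, by simpa [transW, hs] using AlmostCanonical.head hcs hB⟩
    · obtain ⟨n, hn⟩ := exists_almostCanonical_qsubst_transW (not_exists.1 hAvar) hA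
      exact ⟨n, .app hn hB⟩


theorem cbnStep_readbackW_id (z : ℕ) (s : QTerm) :
    CbnStep (readbackW (app (con z (.var z) []) s)) (readbackW s) := by
  have hfv : Lam.fvList (.lam z (.var z)) = [] := by simp [Lam.fvList, Lam.fv]
  simpa [readbackW_con, hfv, Lam.msubst, Lam.substOf, Lam.subst] using
    CbnStep.beta (x := z) (M := .var z) (N := readbackW s)

theorem cbnStep_readbackW_proj {z w : ℕ} (hwz : w ≠ z) {s : QTerm} (hs : (readbackW s).fv = ∅)
    (h : QTerm) : CbnStep (readbackW (app (con z (.var w) [s]) h)) (readbackW s) := by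
  have hfv : Lam.fvList (.lam z (.var w)) = [w] := by
    have : Lam.fv (.lam z (.var w)) = {w} := by simp [Lam.fv, hwz]
    simp [Lam.fvList, this]
  have hbeta := CbnStep.beta (x := z) (M := readbackW s) (N := readbackW h)
  rw [Lam.subst_eq_self_of_not_mem_fv _ (by simp [hs])] at hbeta
  simpa [readbackW_con, hfv, Lam.msubst, Lam.substOf, hwz] using hbeta

theorem cbnStep_readbackW_beta {y : ℕ} {N : Lam} {ts : List QTerm} {v : QTerm}
    (hts : ∀ t ∈ ts, IsConTermQ t) (hwts : ∀ t ∈ ts, WFQ t)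
    (hlen : ts.length = (Lam.fvList (.lam y N)).length) :
    CbnStep (readbackW (app (con y N ts) v))
      (readbackW (qsubst (substOfQ (Lam.fvList (.lam y N) ++ [y]) (ts ++ [v])) (transW N))) := by
  set xs := Lam.fvList (.lam y N)
  set ρ := Lam.substOf xs (ts.map readbackW)
  have hρ : Lam.ClosedSubst ρ := fun z M hzM => by
    obtain ⟨q, hq, rfl⟩ := List.mem_map.1 (List.mem_of_lookup_zip_eq_some hzM)
    exact (hts q hq).fv_readbackW_eq_empty (hwts q hq)
  have hy : y ∉ xs := by simp [xs, Lam.mem_fvList, Lam.fv]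
  have hσ : (fun z => if z = y then some (readbackW v) else if z = y then none else ρ z) =
      fun z => (substOfQ (xs ++ [y]) (ts ++ [v]) z).map readbackW := by
    funext z
    by_cases hzy : z = y
    · subst hzy
      simp [substOfQ, List.lookup_zip_append_singleton_of_not_mem hlen.symm hy]
    · simp [substOfQ, ρ, Lam.substOf, hzy, List.lookup_zip_append_singleton_of_ne hlen.symm hzy,
        List.lookup_zip_map]
  rw [readbackW_app, readbackW_con, readbackW_qsubst_transW, ← hσ,
    ← Lam.subst_msubst _ (hρ.erase y) (by simp)]
  exact .beta

theorem assignsConTerms_substOfQ {xs : List ℕ} {ts : List QTerm} (hlen : xs.length = ts.length)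
    (hts : ∀ t ∈ ts, IsConTermQ t) {P : Lam} (hP : ∀ z ∈ P.fv, z ∈ xs) :
    AssignsConTerms (substOfQ xs ts) P := by
  intro z hz
  obtain ⟨s, hs⟩ := Option.isSome_iff_exists.1 (List.lookup_zip_isSome hlen (hP z hz))
  exact ⟨s, hs, hts s (List.mem_of_lookup_zip_eq_some hs)⟩

theorem CanonicalQ.psiStep {t u : QTerm} (hcan : CanonicalQ t) (hwf : WFQ t)
    (hs : PsiStep t u) : CbnStep (readbackW t) (readbackW u) ∧ ∃ n, AlmostCanonical u n := by
  induction hcan generalizing u with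
  | con hts => exact ((IsConTermQ.con hts).not_psiStep hs).elim
  | @app t₀ v _ hv ih =>
    cases hwf with | app hwt₀ _ =>
    cases hs with
    | appL hs =>
      obtain ⟨hcbn, n, hn⟩ := ih hwt₀ hs
      exact ⟨by simpa using hcbn.appL, n, .app hn hv⟩
    | appR hs => exact (hv.not_psiStep hs).elim
    | adm => contradiction
    | id_capp hw hf => exact ⟨by simpa using cbnStep_readbackW_id _ (capp _ _), _, .head hw hf⟩
    | id_con hts => exact ⟨cbnStep_readbackW_id _ _, 0, .con hts⟩
    | proj_capp hwz hf hg =>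
      cases hwt₀ with | con _ hwarg =>
      have hclosed := (hf.capp hg).fv_readbackW_eq_empty (hwarg _ (List.mem_singleton_self _))
      exact ⟨by simpa using cbnStep_readbackW_proj hwz hclosed v, _, .head hf hg⟩
    | proj_con hwz hts =>
      cases hwt₀ with | con _ hwarg =>
      have hclosed :=
        (IsConTermQ.con hts).fv_readbackW_eq_empty (hwarg _ (List.mem_singleton_self _))
      exact ⟨cbnStep_readbackW_proj hwz hclosed v, 0, .con hts⟩
    | @beta y N ts _ hN hts hv hlen =>
      cases hwt₀ with | con _ hwts =>
      refine ⟨cbnStep_readbackW_beta hts hwts hlen, exists_almostCanonical_qsubst_transW hN ?_⟩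
      refine assignsConTerms_substOfQ (by simp [hlen])
        (by simpa [or_imp, forall_and] using ⟨hts, hv⟩) ?_
      intro z hz
      by_cases hzy : z = y
      · simp [hzy]
      · simp [Lam.mem_fvList, Lam.fv, hz, hzy]

end QTerm

theorem psi_simulation_general (t u : QTerm)
    (hwf : QTerm.WFQ t) (hcan : QTerm.CanonicalQ t)
    (hstep : PsiStep t u) :
    ∃ n : ℕ,
      CbnStep (readbackW t) (readbackW u) ∧
      (∃ v : QTerm, NSteps PsiStep n u v ∧ QTerm.CanonicalQ v) ∧
      (∀ m, m ≤ n → ∀ w : QTerm, NSteps PsiStep m u w →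
        QTerm.countApp w = QTerm.countApp u + m) ∧
      (∀ m, m ≤ n → ∀ w : QTerm, NSteps PsiStep m u w →
        readbackW w = readbackW u) := by
  obtain ⟨hcbn, n, hu⟩ := hcan.psiStep hwf hstep
  exact ⟨n, hcbn, hu.exists_nSteps_canonicalQ,
    fun _ hm _ hw => (hu.nSteps hm hw).1, fun _ hm _ hw => (hu.nSteps hm hw).2⟩

/-- If a canonical closed Ψ-term t rewrites in one step to u, then there is n such
that: (1) ⟦t⟧_w →h ⟦u⟧_w; (2) u rewrites in n steps to some canonical term v;
(3) whenever u →ᵐ w with m ≤ n, the number of occurrences of app in w is that of u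
plus m; and (4) for every such w, ⟦w⟧_w = ⟦u⟧_w. -/
theorem psi_simulation (t u : QTerm)
    (hwf : QTerm.WFQ t) (hcl : QTerm.ClosedQ t) (hcan : QTerm.CanonicalQ t)
    (hstep : PsiStep t u) :
    ∃ n : ℕ,
      CbnStep (readbackW t) (readbackW u) ∧
      (∃ v : QTerm, NSteps PsiStep n u v ∧ QTerm.CanonicalQ v) ∧
      (∀ m, m ≤ n → ∀ w : QTerm, NSteps PsiStep m u w →
        QTerm.countApp w = QTerm.countApp u + m) ∧
      (∀ m, m ≤ n → ∀ w : QTerm, NSteps PsiStep m u w →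
        readbackW w = readbackW u) :=
  psi_simulation_general t u hwf hcan hstep
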